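/- Let M(n,l) satisfy the recursion M(n,n)=1, M(2n+2,0)=M(2n+1,1), M(n,l)=M(n-1,l-1)+a_{l+1}·M(n-1,l+1) with positive integers a_l, and let ε(n) = 0 if n is even, 1 if n is odd. Then for n ≥ 4, the maximum over all l < n with n - l even of M(n-2,l)/M(n,l) equals M(n-2+ε(n),0)/M(n+ε(n),0). -/
import Mathlib

private lemma mediant_le' {A B C D c : ℝ} (hC : 0 < C) (hD : 0 < D) (hc : 0 ≤ c)
    (h : B / D ≤ A / C) : (A + c * B) / (C + c * D) ≤ A / C := by
  have hCD : 0 < C + c * D := add_pos_of_pos_of_nonneg hC (mul_nonneg hc hD.le)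
  rw [div_le_div_iff₀ hCD hC]
  rw [div_le_div_iff₀ hD hC] at h
  nlinarith

private lemma le_mediant' {A B C D c : ℝ} (hC : 0 < C) (hD : 0 < D) (hc : 0 ≤ c)
    (h : B / D ≤ A / C) : B / D ≤ (A + c * B) / (C + c * D) := by
  have hCD : 0 < C + c * D := add_pos_of_pos_of_nonneg hC (mul_nonneg hc hD.le)
  rw [div_le_div_iff₀ hD hCD]
  rw [div_le_div_iff₀ hD hC] at h
  nlinarith

private lemma recAt (a : ℕ → ℕ) (M : ℕ → ℕ → ℝ)
    (hMrec : ∀ n l, 0 < l → l < n →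
      M n l = M (n - 1) (l - 1) + (a (l + 1) : ℝ) * M (n - 1) (l + 1))
    (n l n' l1 l2 : ℕ) (h0 : 0 < l) (h1 : l < n)
    (hn' : n' = n - 1) (hl1 : l1 = l - 1) (hl2 : l2 = l + 1) :
    M n l = M n' l1 + (a l2 : ℝ) * M n' l2 := by
  subst hn' hl1 hl2; exact hMrec n l h0 h1

private lemma M0At (M : ℕ → ℕ → ℝ)
    (hM0 : ∀ n, M (2 * n + 2) 0 = M (2 * n + 1) 1)
    (t m m' : ℕ) (h : m = 2 * t + 2) (h' : m' = 2 * t + 1) :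
    M m 0 = M m' 1 := by subst h h'; exact hM0 t

section Main

variable (a : ℕ → ℕ) (M : ℕ → ℕ → ℝ)

/-- Upper mediant step: `f_{k+3}(j+1) ≤ f_{k+2}(j)` where `f_n(l) = M(n-2,l)/M(n,l)`. -/
private lemma lemU (ha : ∀ l, 1 ≤ l → 0 < a l)
    (hMdiag : ∀ n, M n n = 1)
    (hMrec : ∀ n l, 0 < l → l < n →
      M n l = M (n - 1) (l - 1) + (a (l + 1) : ℝ) * M (n - 1) (l + 1))
    (hMpos : ∀ n l, l ≤ n → (n - l) % 2 = 0 → 0 < M n l)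
    (k j : ℕ)
    (hQ : ∀ l, l + 2 ≤ k → (k - l) % 2 = 0 →
      M k (l + 2) / M (k + 2) (l + 2) ≤ M k l / M (k + 2) l)
    (hj : j ≤ k) (hpar : (k - j) % 2 = 0) :
    M (k + 1) (j + 1) / M (k + 3) (j + 1) ≤ M k j / M (k + 2) j := by
  rcases eq_or_lt_of_le hj with rfl | hlt
  · have h2 : M (j + 3) (j + 1) = M (j + 2) j + (a (j + 2) : ℝ) * M (j + 2) (j + 2) :=
      recAt a M hMrec (j + 3) (j + 1) (j + 2) j (j + 2) (by omega) (by omega)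
        (by omega) (by omega) (by omega)
    have hpos : 0 < M (j + 2) j := hMpos (j + 2) j (by omega) (by omega)
    have ha' : (1 : ℝ) ≤ (a (j + 2) : ℝ) := by exact_mod_cast ha (j + 2) (by omega)
    rw [hMdiag (j + 1), hMdiag j, h2, hMdiag (j + 2)]
    rw [div_le_div_iff₀ (by nlinarith) hpos]
    nlinarith
  · have e1 : M (k + 1) (j + 1) = M k j + (a (j + 2) : ℝ) * M k (j + 2) :=
      recAt a M hMrec (k + 1) (j + 1) k j (j + 2) (by omega) (by omega)
        (by omega) (by omega) (by omega)
    have e2 : M (k + 3) (j + 1) = M (k + 2) j + (a (j + 2) : ℝ) * M (k + 2) (j + 2) :=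
      recAt a M hMrec (k + 3) (j + 1) (k + 2) j (j + 2) (by omega) (by omega)
        (by omega) (by omega) (by omega)
    rw [e1, e2]
    exact mediant_le' (hMpos (k + 2) j (by omega) (by omega))
      (hMpos (k + 2) (j + 2) (by omega) (by omega))
      (by positivity)
      (hQ j (by omega) hpar)

/-- Lower mediant step: `f_{k+3}(l) ≥ f_{k+2}(l+1)`. -/
private lemma lemL (ha : ∀ l, 1 ≤ l → 0 < a l)
    (hM0 : ∀ n, M (2 * n + 2) 0 = M (2 * n + 1) 1)
    (hMrec : ∀ n l, 0 < l → l < n →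
      M n l = M (n - 1) (l - 1) + (a (l + 1) : ℝ) * M (n - 1) (l + 1))
    (hMpos : ∀ n l, l ≤ n → (n - l) % 2 = 0 → 0 < M n l)
    (k l : ℕ)
    (hQ : ∀ l, l + 2 ≤ k → (k - l) % 2 = 0 →
      M k (l + 2) / M (k + 2) (l + 2) ≤ M k l / M (k + 2) l)
    (hl : l + 1 ≤ k) (hpar : (k + 1 - l) % 2 = 0) :
    M k (l + 1) / M (k + 2) (l + 1) ≤ M (k + 1) l / M (k + 3) l := by
  rcases Nat.eq_zero_or_pos l with rfl | hlpos
  · -- l = 0, so k is odd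
    obtain ⟨t, rfl⟩ : ∃ t, k = 2 * t + 1 := ⟨k / 2, by omega⟩
    have hA : M (2 * t + 1 + 1) 0 = M (2 * t + 1) (0 + 1) := by
      rw [M0At M hM0 t (2 * t + 1 + 1) (2 * t + 1) (by omega) (by omega)]
    have hB : M (2 * t + 1 + 3) 0 = M (2 * t + 1 + 2) (0 + 1) := by
      rw [M0At M hM0 (t + 1) (2 * t + 1 + 3) (2 * t + 1 + 2) (by omega) (by omega)]
    rw [hA, hB]
  · obtain ⟨j, rfl⟩ : ∃ j, l = j + 1 := ⟨l - 1, by omega⟩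
    have e1 : M (k + 1) (j + 1) = M k j + (a (j + 2) : ℝ) * M k (j + 2) :=
      recAt a M hMrec (k + 1) (j + 1) k j (j + 2) (by omega) (by omega)
        (by omega) (by omega) (by omega)
    have e2 : M (k + 3) (j + 1) = M (k + 2) j + (a (j + 2) : ℝ) * M (k + 2) (j + 2) :=
      recAt a M hMrec (k + 3) (j + 1) (k + 2) j (j + 2) (by omega) (by omega)
        (by omega) (by omega) (by omega)
    have e3 : j + 1 + 1 = j + 2 := by omega
    rw [e3, e1, e2]
    exact le_mediant' (hMpos (k + 2) j (by omega) (by omega))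
      (hMpos (k + 2) (j + 2) (by omega) (by omega))
      (by positivity)
      (hQ j (by omega) (by omega))

/-- The ratio `M(m,l)/M(m+2,l)` is decreasing in `l` (steps of 2). -/
private lemma keyQ (ha : ∀ l, 1 ≤ l → 0 < a l)
    (hMdiag : ∀ n, M n n = 1)
    (hM0 : ∀ n, M (2 * n + 2) 0 = M (2 * n + 1) 1)
    (hMrec : ∀ n l, 0 < l → l < n →
      M n l = M (n - 1) (l - 1) + (a (l + 1) : ℝ) * M (n - 1) (l + 1))
    (hMpos : ∀ n l, l ≤ n → (n - l) % 2 = 0 → 0 < M n l) :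
    ∀ m l, l + 2 ≤ m → (m - l) % 2 = 0 →
      M m (l + 2) / M (m + 2) (l + 2) ≤ M m l / M (m + 2) l := by
  intro m
  induction m with
  | zero => intro l hl _; omega
  | succ k ih =>
    intro l hl hpar
    have h1 := lemU a M ha hMdiag hMrec hMpos k (l + 1) ih (by omega) (by omega)
    have h2 := lemL a M ha hM0 hMrec hMpos k l ih (by omega) (by omega)
    have e1 : l + 1 + 1 = l + 2 := by omega
    have e2 : k + 3 = k + 1 + 2 := by omega
    rw [e1, e2] at h1
    rw [e2] at h2
    exact h1.trans h2

private lemma chainQ (ha : ∀ l, 1 ≤ l → 0 < a l)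
    (hMdiag : ∀ n, M n n = 1)
    (hM0 : ∀ n, M (2 * n + 2) 0 = M (2 * n + 1) 1)
    (hMrec : ∀ n l, 0 < l → l < n →
      M n l = M (n - 1) (l - 1) + (a (l + 1) : ℝ) * M (n - 1) (l + 1))
    (hMpos : ∀ n l, l ≤ n → (n - l) % 2 = 0 → 0 < M n l) :
    ∀ l m, l ≤ m → (m - l) % 2 = 0 →
      M m l / M (m + 2) l ≤ M m (m % 2) / M (m + 2) (m % 2) := by
  intro l
  induction l using Nat.strong_induction_on with
  | _ l ih =>
    intro m hlm hpar
    rcases lt_or_ge l 2 with h | h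
    · have hl : l = m % 2 := by omega
      rw [hl]
    · obtain ⟨j, rfl⟩ : ∃ j, l = j + 2 := ⟨l - 2, by omega⟩
      exact le_trans (keyQ a M ha hMdiag hM0 hMrec hMpos m j (by omega) (by omega))
        (ih j (by omega) m (by omega) (by omega))

private lemma targetEq (hM0 : ∀ n, M (2 * n + 2) 0 = M (2 * n + 1) 1)
    (n : ℕ) (hn : 4 ≤ n) :
    M (n - 2 + n % 2) 0 / M (n + n % 2) 0 = M (n - 2) (n % 2) / M n (n % 2) := by
  rcases Nat.even_or_odd n with he | ho
  · have h2 : n % 2 = 0 := Nat.even_iff.mp he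
    rw [h2, show n - 2 + 0 = n - 2 by omega, show n + 0 = n by omega]
  · have h2 : n % 2 = 1 := Nat.odd_iff.mp ho
    rw [h2]
    have hA : M (n - 2 + 1) 0 = M (n - 2) 1 :=
      M0At M hM0 ((n - 3) / 2) (n - 2 + 1) (n - 2) (by omega) (by omega)
    have hB : M (n + 1) 0 = M n 1 :=
      M0At M hM0 ((n - 1) / 2) (n + 1) n (by omega) (by omega)
    rw [hA, hB]

end Main

/-- For the quantities `M(n,l)` defined by the recursion `M(n,n)=1`,
`M(2n+2,0)=M(2n+1,1)`, `M(n,l)=M(n-1,l-1)+a_{l+1}·M(n-1,l+1)` (with positive integers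
`a l` and all values positive), for `n ≥ 4` the maximum of `M(n-2,l)/M(n,l)` over all
`l < n` with `n - l` even equals `M(n-2+ε(n),0)/M(n+ε(n),0)`, where `ε(n) = n % 2`. -/
theorem M_ratio_max (a : ℕ → ℕ) (ha : ∀ l, 1 ≤ l → 0 < a l)
    (M : ℕ → ℕ → ℝ)
    (hMdiag : ∀ n, M n n = 1)
    (hM0 : ∀ n, M (2 * n + 2) 0 = M (2 * n + 1) 1)
    (hMrec : ∀ n l, 0 < l → l < n →
      M n l = M (n - 1) (l - 1) + (a (l + 1) : ℝ) * M (n - 1) (l + 1))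
    (hMpos : ∀ n l, l ≤ n → (n - l) % 2 = 0 → 0 < M n l) :
    ∀ n, 4 ≤ n →
      IsGreatest {x : ℝ | ∃ l, l < n ∧ (n - l) % 2 = 0 ∧ x = M (n - 2) l / M n l}
        (M (n - 2 + n % 2) 0 / M (n + n % 2) 0) := by
  intro n hn
  constructor
  · exact ⟨n % 2, by omega, by omega, targetEq M hM0 n hn⟩
  · rintro x ⟨l, hl, hpar, rfl⟩
    have hm := chainQ a M ha hMdiag hM0 hMrec hMpos l (n - 2) (by omega) (by omega)
    rw [show n - 2 + 2 = n by omega, show (n - 2) % 2 = n % 2 by omega] at hm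
    exact hm.trans_eq (targetEq M hM0 n hn).symm
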